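/- Let λ ≠ 1 and α be a positive integer, and define the Frobenius–Euler polynomials of order α by ((1-λ)/(e^t-λ))^α e^{xt} = ∑_{n≥0} H_n^{(α)}(x|λ) t^n/n!. Let b ≠ 0 and, for n ≥ 1, let Sₙ(x) be the Sheffer polynomial determined by Sₙ(x) = ((1-λ)/(e^t-λ))^α · x · ((e^{bt}-1)/t)^n x^{n-1} (the umbral-calculus formula of Theorem 1 applied to the pair (((e^t-λ)/(1-λ))^α, t²/(e^{bt}-1))). Then Sₙ(x) = ∑_{k=0}^{n-1} (C(n-1,k)/C(k+n,n)) · S₂(k+n,n) · b^{k+n} · H_{n-k}^{(α)}(x|λ). -/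

import Mathlib

open PowerSeries Nat

noncomputable section

/-- The exponential series `e^t ∈ ℚ[[t]]`. -/
def expS : PowerSeries ℚ := PowerSeries.exp ℚ

/-- `log(1+t) = ∑_{k≥1} (-1)^{k+1} t^k / k`. -/
def logS : PowerSeries ℚ := PowerSeries.mk fun k => if k = 0 then 0 else (-1 : ℚ)^(k+1) / k

/-- `log(1+t)/t = ∑_{k≥0} (-1)^k t^k/(k+1)`. -/
def LtS : PowerSeries ℚ := PowerSeries.mk fun k => (-1 : ℚ)^k / (k+1)

/-- `(e^{bt} - 1)/t`. -/
def ebt (b : ℚ) : PowerSeries ℚ := PowerSeries.mk fun m => b^(m+1) / (m+1)!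

/-- Falling factorial `(x)_m = x(x-1)⋯(x-m+1)`. -/
def ff (x : ℚ) (m : ℕ) : ℚ := ∏ i ∈ Finset.range m, (x - i)

/-- `(1+t)^x = ∑_m (x)_m t^m/m!`. -/
def onePlusPow (x : ℚ) : PowerSeries ℚ := PowerSeries.mk fun m => ff x m / m !

/-- Integer powers of a power series (negative powers via `PowerSeries.inv`). -/
def zp (f : PowerSeries ℚ) : ℤ → PowerSeries ℚ
  | Int.ofNat n => f ^ n
  | Int.negSucc n => f⁻¹ ^ (n + 1)

/-- Stirling numbers of the second kind. -/
def S2 : ℕ → ℕ → ℕ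
  | 0, 0 => 1
  | 0, _ + 1 => 0
  | _ + 1, 0 => 0
  | n + 1, k + 1 => (k + 1) * S2 n (k + 1) + S2 n k

/-- Signed Stirling numbers of the first kind: `(x)_n = ∑_l S1 n l • x^l`. -/
def S1 : ℕ → ℕ → ℤ
  | 0, 0 => 1
  | 0, _ + 1 => 0
  | _ + 1, 0 => 0
  | n + 1, k + 1 => S1 n k - n * S1 n (k + 1)

/-- Bernoulli polynomial of (integer) order `a` evaluated at `x`:
`(t/(e^t-1))^a e^{xt} = ∑_m Bpol a x m • t^m/m!`. -/
def Bpol (a : ℤ) (x : ℚ) (m : ℕ) : ℚ :=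
  m ! * PowerSeries.coeff m (zp (ebt 1)⁻¹ a * PowerSeries.rescale x expS)

/-- Bernoulli numbers of order `a`. -/
def Bnum (a : ℤ) (m : ℕ) : ℚ := Bpol a 0 m

/-- Narumi numbers: `(log(1+t)/t)^n = ∑_l Nnum n l • t^l/l!`. -/
def Nnum (n l : ℕ) : ℚ := l ! * PowerSeries.coeff l (LtS ^ n)

/-- Narumi polynomials of (integer) order `a`:
`(log(1+t)/t)^a (1+t)^x = ∑_l Npol a x l • t^l/l!`. -/
def Npol (a : ℤ) (x : ℚ) (l : ℕ) : ℚ :=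
  l ! * PowerSeries.coeff l (zp LtS a * onePlusPow x)

/-- Bernoulli polynomials of the second kind:
`t(1+t)^x/log(1+t) = ∑_m b2 x m • t^m/m!`. -/
def b2 (x : ℚ) (m : ℕ) : ℚ := m ! * PowerSeries.coeff m (onePlusPow x * LtS⁻¹)

/-- Poisson–Charlier polynomial `C_n(x;a)`. -/
def PC (n : ℕ) (x a : ℚ) : ℚ :=
  ∑ k ∈ Finset.range (n + 1), (n.choose k : ℚ) * (-1)^(n - k) * (a⁻¹)^k * ff x k

/-- Generalized binomial coefficient `C(x, m) = (x)_m/m!`. -/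
def gchoose (x : ℚ) (m : ℕ) : ℚ := ff x m / m !

/-- Action of a power series `f(t) = ∑ a_k t^k/k!` on a polynomial:
`f(t) p(x) = ∑_k a_k p^{(k)}(x)/k!` (a finite sum). -/
def act (f : PowerSeries ℚ) (p : Polynomial ℚ) : Polynomial ℚ :=
  ∑ k ∈ Finset.range (p.natDegree + 1),
    PowerSeries.coeff k f • (⇑Polynomial.derivative)^[k] p

/-- `e^{xt} ∈ (ℚ[x])[[t]]`. -/
def expPoly : PowerSeries (Polynomial ℚ) :=
  PowerSeries.mk fun k => ((k ! : ℚ)⁻¹) • Polynomial.X ^ k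

/-- The Sheffer polynomial sequence attached to an invertible series `f`:
`f(t) e^{xt} = ∑_n (polyOf f n) t^n/n!`. -/
def polyOf (f : PowerSeries ℚ) (n : ℕ) : Polynomial ℚ :=
  (n ! : ℚ) • PowerSeries.coeff n (PowerSeries.map Polynomial.C f * expPoly)

/-- `((1-λ)/(e^t-λ))^α`. -/
def FEser (lam : ℚ) (α : ℕ) : PowerSeries ℚ :=
  (PowerSeries.C (1 - lam) * (expS - PowerSeries.C lam)⁻¹) ^ α

/-- Frobenius–Euler polynomials of order `α`. -/
def FE (lam : ℚ) (α n : ℕ) : Polynomial ℚ := polyOf (FEser lam α) n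

/-- `(2/(e^t+1))^α`. -/
def Eser (α : ℕ) : PowerSeries ℚ := (PowerSeries.C (2 : ℚ) * (expS + 1)⁻¹) ^ α

/-- Euler polynomials of order `α`. -/
def Epol (α n : ℕ) : Polynomial ℚ := polyOf (Eser α) n

/-- `((1-λ)/(e^{(λ-1)t}-λ))^α`. -/
def Aser (lam : ℚ) (α : ℕ) : PowerSeries ℚ :=
  (PowerSeries.C (1 - lam) *
    (PowerSeries.rescale (lam - 1) expS - PowerSeries.C lam)⁻¹) ^ α

/-- Frobenius-type Eulerian polynomials of order `α`. -/
def Apol (lam : ℚ) (α n : ℕ) : Polynomial ℚ := polyOf (Aser lam α) n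

end

/-!
Since `t · (e^{bt}-1)/t = e^{bt}-1` and `(e^t-1)^n = n! ∑_m S₂(m,n) t^m/m!` (both sides satisfy
`D(E^{n+1}) = (n+1)(E^{n+1} + E^n)` for `E = e^t - 1`, which is the Stirling recurrence),
`x · ((e^{bt}-1)/t)^n x^{n-1}` is an explicit combination of the monomials `x^{n-k}`. The action of
a series is linear and sends `x^m` to the `m`-th Sheffer polynomial of that series, so applying
`((1-λ)/(e^t-λ))^α` turns each `x^{n-k}` into `H_{n-k}^{(α)}(x|λ)`.
-/

lemma derivative_expS_sub_one_pow_succ (n : ℕ) :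
    d⁄dX ℚ ((expS - 1) ^ (n + 1)) =
      ((n : ℚ) + 1) • ((expS - 1) ^ (n + 1) + (expS - 1) ^ n) := by
  rw [Derivation.leibniz_pow, map_sub, expS, derivative_exp, Derivation.map_one_eq_zero, sub_zero,
    Nat.add_sub_cancel, smul_eq_mul, ← Nat.cast_smul_eq_nsmul ℚ, Nat.cast_succ]
  congr 1
  ring

lemma coeff_expS_sub_one_pow (m n : ℕ) :
    coeff m ((expS - 1) ^ n) = (n ! * S2 m n / m ! : ℚ) := by
  induction m generalizing n with
  | zero =>
    have h0 : constantCoeff (expS - 1) = 0 := by simp [expS]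
    rcases n with _ | n <;> simp [S2, h0]
  | succ m ih =>
    rcases n with _ | n
    · simp [S2]
    have hcoeff := congrArg (coeff m) (derivative_expS_sub_one_pow_succ n)
    rw [coeff_derivative, map_smul, map_add, ih, ih, smul_eq_mul] at hcoeff
    have hS2 : (S2 (m + 1) (n + 1) : ℚ) = (n + 1) * S2 m (n + 1) + S2 m n := by
      simp only [S2]; push_cast; ring
    rw [eq_div_of_mul_eq (by positivity) hcoeff, hS2]
    push_cast [factorial_succ]
    field_simp

lemma X_mul_ebt (b : ℚ) : X * ebt b = rescale b expS - 1 := by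
  ext (_ | m) <;> rw [map_sub, coeff_rescale]
  · simp [expS]
  · simp [ebt, expS, coeff_succ_X_mul, div_eq_mul_inv]

lemma coeff_ebt_pow (b : ℚ) (k n : ℕ) :
    coeff k (ebt b ^ n) = b ^ (k + n) * n ! * S2 (k + n) n / (k + n)! := by
  have h := congrArg (coeff (k + n)) (mul_pow (X : PowerSeries ℚ) (ebt b) n)
  rw [X_mul_ebt, ← map_one (rescale b), ← map_sub, ← map_pow, coeff_rescale,
    coeff_expS_sub_one_pow, coeff_X_pow_mul] at h
  rw [← h]
  ring

lemma coeff_ebt_pow_mul_descFactorial (b : ℚ) (k m n : ℕ) :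
    coeff k (ebt b ^ n) * m.descFactorial k =
      (m.choose k : ℚ) / (k + n).choose n * S2 (k + n) n * b ^ (k + n) := by
  rw [coeff_ebt_pow, Nat.descFactorial_eq_factorial_mul_choose,
    Nat.cast_choose ℚ (Nat.le_add_left n k), Nat.add_sub_cancel]
  push_cast
  field_simp

section Action

variable (f : PowerSeries ℚ)

lemma act_eq_sum_range_of_natDegree_lt {p : Polynomial ℚ} {N : ℕ} (h : p.natDegree < N) :
    act f p = ∑ k ∈ Finset.range N, coeff k f • Polynomial.derivative^[k] p := by
  refine Finset.sum_subset (Finset.range_subset_range.mpr h) fun k _ hk => ?_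
  rw [Finset.mem_range, not_lt] at hk
  rw [Polynomial.iterate_derivative_eq_zero (Nat.lt_of_succ_le hk), smul_zero]

lemma act_add (p q : Polynomial ℚ) : act f (p + q) = act f p + act f q := by
  rw [act_eq_sum_range_of_natDegree_lt f (Nat.lt_succ_of_le (Polynomial.natDegree_add_le p q)),
    act_eq_sum_range_of_natDegree_lt f (Nat.lt_succ_of_le (le_max_left _ _)),
    act_eq_sum_range_of_natDegree_lt f (Nat.lt_succ_of_le (le_max_right p.natDegree _)),
    ← Finset.sum_add_distrib]
  simp only [iterate_map_add, smul_add]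

lemma act_smul (c : ℚ) (p : Polynomial ℚ) : act f (c • p) = c • act f p := by
  rw [act_eq_sum_range_of_natDegree_lt f (Nat.lt_succ_of_le (Polynomial.natDegree_smul_le c p)),
    act, Finset.smul_sum]
  simp only [Polynomial.iterate_derivative_smul, smul_comm c]

noncomputable def actLinear : Polynomial ℚ →ₗ[ℚ] Polynomial ℚ where
  toFun := act f
  map_add' := act_add f
  map_smul' := act_smul f

lemma act_sum_smul {ι : Type*} (s : Finset ι) (c : ι → ℚ) (p : ι → Polynomial ℚ) :
    act f (∑ i ∈ s, c i • p i) = ∑ i ∈ s, c i • act f (p i) := by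
  have h := map_sum (actLinear f) (fun i => c i • p i) s
  simp only [map_smul] at h
  exact h

lemma act_X_pow (m : ℕ) :
    act f (Polynomial.X ^ m) =
      ∑ k ∈ Finset.range (m + 1),
        (coeff k f * m.descFactorial k) • Polynomial.X ^ (m - k) := by
  rw [act, Polynomial.natDegree_X_pow]
  refine Finset.sum_congr rfl fun k _ => ?_
  rw [Polynomial.iterate_derivative_X_pow_eq_smul, smul_smul]

lemma X_mul_act_X_pow (m : ℕ) :
    Polynomial.X * act f (Polynomial.X ^ m) =
      ∑ k ∈ Finset.range (m + 1),
        (coeff k f * m.descFactorial k) • Polynomial.X ^ (m + 1 - k) := by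
  rw [act_X_pow, Finset.mul_sum]
  refine Finset.sum_congr rfl fun k hk => ?_
  rw [mul_smul_comm, ← _root_.pow_succ', Nat.sub_add_comm (Finset.mem_range_succ_iff.mp hk)]

lemma polyOf_eq_act_X_pow (m : ℕ) : polyOf f m = act f (Polynomial.X ^ m) := by
  rw [act_X_pow, polyOf, coeff_mul, Finset.Nat.sum_antidiagonal_eq_sum_range_succ_mk,
    Finset.smul_sum]
  refine Finset.sum_congr rfl fun k hk => ?_
  have hfac : ((m - k)! : ℚ) * m.descFactorial k = m ! := by
    exact_mod_cast Nat.factorial_mul_descFactorial (Finset.mem_range_succ_iff.mp hk)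
  rw [coeff_map, expPoly, coeff_mk, mul_smul_comm, ← Polynomial.smul_eq_C_mul, smul_smul,
    smul_smul, ← hfac]
  congr 1
  field_simp

end Action

theorem stmt11_general (lam : ℚ) (α : ℕ) (b : ℚ) (n : ℕ) (hn : 1 ≤ n) :
    act (FEser lam α) (Polynomial.X * act ((ebt b) ^ n) (Polynomial.X ^ (n - 1))) =
      ∑ k ∈ Finset.range n,
        (((n - 1).choose k : ℚ) / ((k + n).choose n) * S2 (k + n) n * b ^ (k + n)) •
          FE lam α (n - k) := by
  rw [X_mul_act_X_pow, Nat.sub_add_cancel hn, act_sum_smul]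
  refine Finset.sum_congr rfl fun k _ => ?_
  rw [FE, polyOf_eq_act_X_pow, coeff_ebt_pow_mul_descFactorial]

theorem stmt11 (lam : ℚ) (hlam : lam ≠ 1) (α : ℕ) (hα : 0 < α)
    (b : ℚ) (hb : b ≠ 0) (n : ℕ) (hn : 1 ≤ n) :
    act (FEser lam α) (Polynomial.X * act ((ebt b) ^ n) (Polynomial.X ^ (n - 1))) =
      ∑ k ∈ Finset.range n,
        (((n - 1).choose k : ℚ) / ((k + n).choose n) * S2 (k + n) n * b ^ (k + n)) •
          FE lam α (n - k) :=
  stmt11_general lam α b n hn
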